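/- Let W be a reduced word in the free product G₁ ∗ G₂ having a period γ with γ < ℓ(W) (any such period is even, since consecutive letters of a reduced word alternate between the two factors), and suppose that no letter of W has order 2. Then W has no subword of the form w r w⁻¹, where r is a letter and w is a word with ℓ(w) ≥ γ/2. -/

import Mathlib

/-!
The period is even, say `γ = 2q`, because the factors of the letters of a reduced word
alternate.  Inside a subword `w r w⁻¹` with `ℓ(w) = m ≥ q`, the positions `m - q` and `m + q`
carry a letter `x` of `w` and its inverse `x⁻¹`; they are `γ` apart, so the period forces
`x = x⁻¹`, making `x` a letter of order 2.
-/

namespace FreeProductWords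

variable {G : Bool → Type*} [∀ i, Group (G i)]

/-- A reduced word in the free product `G₁ ∗ G₂` of the two groups `G true` and `G false`:
every letter is nontrivial and consecutive letters lie in different factors. -/
def Reduced (W : List (Σ i, G i)) : Prop :=
  (∀ x ∈ W, x.2 ≠ 1) ∧ W.Chain' fun u v => u.1 ≠ v.1

/-- The inverse word `w⁻¹ = x_m⁻¹ ⋯ x₂⁻¹ x₁⁻¹` of the word `w = x₁x₂⋯x_m`. -/
def invWord (w : List (Σ i, G i)) : List (Σ i, G i) :=
  (w.map fun x => ⟨x.1, x.2⁻¹⟩).reverse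

/-- The word `W` has period `p`: `W_i = W_{i+p}` whenever both positions lie in `W`. -/
def HasPeriod (W : List (Σ i, G i)) (p : ℕ) : Prop :=
  ∀ i, i + p < W.length → W[i]? = W[i + p]?

end FreeProductWords

theorem List.IsChain.apply_getElem_add_eq_iff_even {α : Type*} {f : α → Bool} {l : List α}
    (hl : l.IsChain fun a b => f a ≠ f b) (i : ℕ) :
    ∀ k (h : i + k < l.length), f l[i + k] = f l[i] ↔ Even k
  | 0, _ => by simp
  | k + 1, h => by
    have hstep : f l[i + k] ≠ f l[i + k + 1] := hl.getElem (i + k) h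
    rw [Nat.even_add_one, ← hl.apply_getElem_add_eq_iff_even i k (by omega)]
    change f l[i + k + 1] = f l[i] ↔ ¬f l[i + k] = f l[i]
    revert hstep
    cases f l[i + k + 1] <;> cases f l[i + k] <;> cases f l[i] <;> decide

theorem orderOf_eq_two_of_inv_eq_self {M : Type*} [Group M] {x : M} (hx : x⁻¹ = x)
    (h1 : x ≠ 1) : orderOf x = 2 :=
  orderOf_eq_prime (by rw [sq]; exact inv_eq_iff_mul_eq_one.mp hx) h1

namespace FreeProductWords

variable {G : Bool → Type*}

theorem HasPeriod.of_infix {u W : List (Σ i, G i)} {p : ℕ} (hW : HasPeriod W p)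
    (hu : u <:+: W) : HasPeriod u p := by
  obtain ⟨k, hlen, hk⟩ := List.infix_iff_getElem?.mp hu
  intro i hi
  have hWi := hW (i + k) (by omega)
  rw [Nat.add_right_comm, hk i (by omega), hk (i + p) hi] at hWi
  rwa [List.getElem?_eq_getElem (by omega), List.getElem?_eq_getElem hi]

theorem HasPeriod.even {u : List (Σ i, G i)} {p : ℕ}
    (halt : u.IsChain fun a b => a.1 ≠ b.1) (hp : HasPeriod u p) (hlt : p < u.length) :
    Even p := by
  have h0 := hp 0 (by omega)
  rw [List.getElem?_eq_getElem (by omega), List.getElem?_eq_getElem (by omega)] at h0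
  exact (halt.apply_getElem_add_eq_iff_even 0 p (by omega)).mp
    (congrArg Sigma.fst (Option.some.inj h0)).symm

variable [∀ i, Group (G i)]

theorem getElem?_invWord (w : List (Σ i, G i)) {j : ℕ} (hj : j < w.length) :
    (invWord w)[w.length - 1 - j]? = some ⟨w[j].1, w[j].2⁻¹⟩ := by
  rw [invWord, List.getElem?_reverse (by simp; omega)]
  simp only [List.length_map, List.getElem?_map]
  rw [show w.length - 1 - (w.length - 1 - j) = j by omega, List.getElem?_eq_getElem hj]
  rfl

theorem exists_inv_eq_self_of_hasPeriod_append_invWord {w : List (Σ i, G i)} {r : Σ i, G i}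
    {q : ℕ} (hq : 0 < q) (hqw : q ≤ w.length) (hp : HasPeriod (w ++ [r] ++ invWord w) (q + q)) :
    ∃ x ∈ w, x.2⁻¹ = x.2 := by
  set m := w.length
  have hj : m - q < m := by omega
  refine ⟨w[m - q], List.getElem_mem hj, sigma_mk_injective (i := w[m - q].1) ?_⟩
  have hper := hp (m - q) (by simp [invWord]; omega)
  rw [List.append_assoc, List.getElem?_append_left (by omega), List.getElem?_eq_getElem hj,
    List.getElem?_append_right (by omega),
    show m - q + (q + q) - w.length = m - 1 - (m - q) + 1 by omega, List.singleton_append,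
    List.getElem?_cons_succ, getElem?_invWord w hj] at hper
  exact (Option.some.inj hper).symm

theorem no_palindromic_subword_of_period_general (W : List (Σ i, G i)) (γ : ℕ)
    (hred : Reduced W) (hγ₁ : 1 ≤ γ)
    (hper : HasPeriod W γ)
    (h₂ : ∀ x ∈ W, orderOf x.2 ≠ 2) :
    ∀ (w : List (Σ i, G i)) (r : Σ i, G i),
      γ ≤ 2 * w.length → ¬ (w ++ [r] ++ invWord w) <:+: W := by
  intro w r hlen hsub
  have hper' := hper.of_infix hsub
  have hlt : γ < (w ++ [r] ++ invWord w).length := by simp [invWord]; omega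
  obtain ⟨q, rfl⟩ := hper'.even (hred.2.infix hsub) hlt
  obtain ⟨x, hxw, hx⟩ :=
    exists_inv_eq_self_of_hasPeriod_append_invWord (by omega) (by omega) hper'
  have hxW : x ∈ W := hsub.subset (by simp [hxw])
  exact h₂ x hxW (orderOf_eq_two_of_inv_eq_self hx (hred.1 x hxW))

/-- Let `W` be a reduced word in the free product `G₁ ∗ G₂` having a period `γ < ℓ(W)`
(such a period is necessarily even), and suppose no letter of `W` has order 2.  Then `W`
has no subword of the form `w r w⁻¹` with `r` a letter and `ℓ(w) ≥ γ/2`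
(i.e. `2·ℓ(w) ≥ γ`). -/
theorem no_palindromic_subword_of_period (W : List (Σ i, G i)) (γ : ℕ)
    (hred : Reduced W) (hγ₁ : 1 ≤ γ) (hγ : γ < W.length)
    (hper : HasPeriod W γ)
    (h₂ : ∀ x ∈ W, orderOf x.2 ≠ 2) :
    ∀ (w : List (Σ i, G i)) (r : Σ i, G i),
      γ ≤ 2 * w.length → ¬ (w ++ [r] ++ invWord w) <:+: W :=
  no_palindromic_subword_of_period_general W γ hred hγ₁ hper h₂

end FreeProductWords
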